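/- Let 0 < r < 1. The solutions ζ of ζ³(ζ⁶ - r⁶)/(r⁶ζ⁶ - 1) = 1 are: ζ = -1, ζ = 1/2 ± i√3/2, together with the cubic roots of (1 + r⁶ ± i√(4 - (1+r⁶)²))/2; all nine solutions have modulus 1. -/

import Mathlib

/-!
Clearing the denominator and writing `s = r⁶`, the equation becomes `ζ⁹ - sζ⁶ - sζ³ + 1 = 0`,
whose left side factors as `(ζ + 1)(ζ² - ζ + 1)(w² - (1 + s)w + 1)` with `w = ζ³`. Both quadratic
factors have the shape `w² - cw + 1` with `c` real and `c² ≤ 4`, so their roots are the conjugate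
pair `(c ± i√(4 - c²))/2`, whose product is `1`: they lie on the unit circle, and hence so do their
cube roots.
-/

open Complex

theorem sq_sub_mul_add_one_eq_zero_iff {c : ℝ} (hc : c ^ 2 ≤ 4) (w : ℂ) :
    w ^ 2 - c * w + 1 = 0 ↔
      w = (c + I * (√(4 - c ^ 2) : ℝ)) / 2 ∨ w = (c - I * (√(4 - c ^ 2) : ℝ)) / 2 := by
  have hdiscrim : discrim 1 (-c : ℂ) 1 = (I * (√(4 - c ^ 2) : ℝ)) * (I * (√(4 - c ^ 2) : ℝ)) := by
    rw [discrim, ← sq, mul_pow, I_sq, ← ofReal_pow, Real.sq_sqrt (by linarith)]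
    push_cast
    ring
  have hroots := quadratic_eq_zero_iff one_ne_zero hdiscrim w
  simp only [neg_neg, mul_one, one_mul] at hroots
  rw [← hroots]
  constructor <;> intro h <;> linear_combination h

theorem norm_eq_one_of_sq_sub_mul_add_one_eq_zero {c : ℝ} (hc : c ^ 2 ≤ 4) {w : ℂ}
    (hw : w ^ 2 - c * w + 1 = 0) : ‖w‖ = 1 := by
  have hsq : √(4 - c ^ 2) ^ 2 = 4 - c ^ 2 := Real.sq_sqrt (by linarith)
  rw [← pow_eq_one_iff_of_nonneg (norm_nonneg w) two_ne_zero, Complex.sq_norm]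
  rcases (sq_sub_mul_add_one_eq_zero_iff hc w).1 hw with rfl | rfl <;>
  · rw [map_div₀, normSq_ofNat, normSq_apply]
    simp only [add_re, sub_re, add_im, sub_im, mul_re, mul_im, ofReal_re, ofReal_im, I_re, I_im]
    linear_combination hsq / 4

theorem cube_mul_sub_sub_factor (s ζ : ℂ) :
    ζ ^ 3 * (ζ ^ 6 - s) - (s * ζ ^ 6 - 1) =
      (ζ + 1) * (ζ ^ 2 - ζ + 1) * ((ζ ^ 3) ^ 2 - (1 + s) * ζ ^ 3 + 1) := by
  ring

/-- The solutions of ζ³(ζ⁶-r⁶)/(r⁶ζ⁶-1) = 1 are ζ = -1, ζ = 1/2 ± i√3/2, together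
with the cube roots of (1+r⁶ ± i√(4-(1+r⁶)²))/2; all nine have modulus 1. -/
theorem nine_solutions (r : ℝ) (hr0 : 0 < r) (hr1 : r < 1) :
    ∀ ζ : ℂ, (r : ℂ) ^ 6 * ζ ^ 6 ≠ 1 →
      ((ζ ^ 3 * (ζ ^ 6 - (r : ℂ) ^ 6) / ((r : ℂ) ^ 6 * ζ ^ 6 - 1) = 1 ↔
        ζ = -1 ∨
        ζ = 1 / 2 + Complex.I * (Real.sqrt 3 : ℝ) / 2 ∨
        ζ = 1 / 2 - Complex.I * (Real.sqrt 3 : ℝ) / 2 ∨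
        ζ ^ 3 = (1 + (r : ℂ) ^ 6 + Complex.I * (Real.sqrt (4 - (1 + r ^ 6) ^ 2) : ℝ)) / 2 ∨
        ζ ^ 3 = (1 + (r : ℂ) ^ 6 - Complex.I * (Real.sqrt (4 - (1 + r ^ 6) ^ 2) : ℝ)) / 2) ∧
      (ζ ^ 3 * (ζ ^ 6 - (r : ℂ) ^ 6) / ((r : ℂ) ^ 6 * ζ ^ 6 - 1) = 1 →
        ‖ζ‖ = 1)) := by
  intro ζ hζ
  have hc : (1 + r ^ 6) ^ 2 ≤ 4 := by
    nlinarith [pow_pos hr0 6, pow_lt_one₀ hr0.le hr1 (n := 6) (by norm_num)]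
  have hfactor : ζ ^ 3 * (ζ ^ 6 - (r : ℂ) ^ 6) / ((r : ℂ) ^ 6 * ζ ^ 6 - 1) = 1 ↔
      ζ + 1 = 0 ∨ ζ ^ 2 - ((1 : ℝ) : ℂ) * ζ + 1 = 0 ∨
        (ζ ^ 3) ^ 2 - ((1 + r ^ 6 : ℝ) : ℂ) * ζ ^ 3 + 1 = 0 := by
    push_cast
    rw [div_eq_one_iff_eq (sub_ne_zero.mpr hζ), ← sub_eq_zero, cube_mul_sub_sub_factor,
      mul_eq_zero, mul_eq_zero, or_assoc]
    simp only [one_mul]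
  constructor
  · rw [hfactor, add_eq_zero_iff_eq_neg, sq_sub_mul_add_one_eq_zero_iff (by norm_num),
      sq_sub_mul_add_one_eq_zero_iff hc]
    norm_num [add_div, sub_div, or_assoc]
  · intro h
    rcases hfactor.1 h with h | h | h
    · simp [add_eq_zero_iff_eq_neg.1 h]
    · exact norm_eq_one_of_sq_sub_mul_add_one_eq_zero (by norm_num) h
    · rw [← pow_eq_one_iff_of_nonneg (norm_nonneg ζ) three_ne_zero, ← norm_pow]
      exact norm_eq_one_of_sq_sub_mul_add_one_eq_zero hc h
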